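/- arXiv:1703.10206 — 4 statements merged into one kernel-verified Lean document; each statement's English description precedes it below -/
import Mathlib

section
/- The associated form f is indefinite: for g positive definite and q-invariant on ℝ³, there exist vectors u, w with f(u,u) > 0 and f(w,w) < 0. -/
/-- The cyclic permutation of coordinates on ℝ³. -/
noncomputable def Q : (Fin 3 → ℝ) → (Fin 3 → ℝ) :=
  fun u => (!![(0:ℝ),1,0; 0,0,1; 1,0,0]).mulVec u

theorem f_indefinite (g : LinearMap.BilinForm ℝ (Fin 3 → ℝ))
    (hsymm : ∀ u v, g u v = g v u)
    (hpos : ∀ u, u ≠ 0 → 0 < g u u)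
    (hinv : ∀ u v, g (Q u) (Q v) = g u v)
    (f : (Fin 3 → ℝ) → (Fin 3 → ℝ) → ℝ)
    (hf : ∀ u v, f u v = g u (Q v) + g (Q u) v) :
    ∃ u w : Fin 3 → ℝ, 0 < f u u ∧ f w w < 0 := by
  refine ⟨![1,1,1], ![1,-1,0], ?_, ?_⟩
  · have hQu : Q ![1,1,1] = ![1,1,1] := by
      funext i
      fin_cases i <;> simp [Q, Matrix.mulVec, Fin.sum_univ_three]
    have hne : (![1,1,1] : Fin 3 → ℝ) ≠ 0 := by
      intro h
      have := congrFun h 0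
      simp at this
    have := hpos _ hne
    rw [hf, hQu]
    linarith
  · set w : Fin 3 → ℝ := ![1,-1,0] with hw
    have hQw : Q w = ![-1,0,1] := by
      funext i
      fin_cases i <;> simp [Q, hw, Matrix.mulVec, Fin.sum_univ_three]
    have hQQw : Q (Q w) = ![0,1,-1] := by
      rw [hQw]
      funext i
      fin_cases i <;> simp [Q, Matrix.mulVec, Fin.sum_univ_three]
    have hQQQw : Q (Q (Q w)) = w := by
      rw [hQQw]
      funext i
      fin_cases i <;> simp [Q, hw, Matrix.mulVec, Fin.sum_univ_three]
    have hsum : w + Q w + Q (Q w) = 0 := by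
      rw [hQQw, hQw]
      funext i
      fin_cases i <;> simp [hw]
    have hne : w ≠ 0 := by
      intro h
      have := congrFun h 0
      simp [hw] at this
    have hww : 0 < g w w := hpos _ hne
    -- g w (Q² w) = g w (Q w)
    have h1 : g (Q w) (Q (Q w)) = g w (Q w) := hinv w (Q w)
    have h2 : g (Q (Q w)) w = g (Q w) (Q (Q w)) := by
      have := hinv (Q w) (Q (Q w))
      rwa [hQQQw] at this
    have h3 : g w (Q (Q w)) = g w (Q w) := by
      rw [hsymm, h2, h1]
    have h0 : g w (w + Q w + Q (Q w)) = 0 := by rw [hsum]; simp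
    have hlin : g w w + g w (Q w) + g w (Q (Q w)) = 0 := by
      simpa [map_add] using h0
    have hneg : g w (Q w) < 0 := by
      rw [h3] at hlin; linarith
    rw [hf, hsymm (Q w) w]
    linarith
end

section
/- For every nonzero u in ℝ³, the angle φ between u and qu satisfies cos φ ≥ -1/2, i.e. φ ∈ [0, 2π/3]. -/
lemma Q_cube (u : Fin 3 → ℝ) : Q (Q (Q u)) = u := by
  funext i
  fin_cases i <;>
    simp [Q, Matrix.mulVec, dotProduct, Fin.sum_univ_three,
      Matrix.vecHead, Matrix.vecTail]

lemma Q_add (x y : Fin 3 → ℝ) : Q (x + y) = Q x + Q y := by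
  simp [Q, Matrix.mulVec_add]

theorem cos_angle_ge (g : LinearMap.BilinForm ℝ (Fin 3 → ℝ))
    (hsymm : ∀ u v, g u v = g v u)
    (hpos : ∀ u, u ≠ 0 → 0 < g u u)
    (hinv : ∀ u v, g (Q u) (Q v) = g u v)
    (u : Fin 3 → ℝ) (hu : u ≠ 0) :
    -1/2 ≤ g u (Q u) / g u u := by
  set a := g u u with ha'
  set b := g u (Q u) with hb'
  have ha : 0 < a := hpos u hu
  set s : Fin 3 → ℝ := u + Q u + Q (Q u) with hs'
  have hs : 0 ≤ g s s := by
    by_cases h : s = 0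
    · simp [h]
    · exact (hpos s h).le
  have h1 : g (Q u) (Q u) = a := hinv u u
  have h2 : g (Q (Q u)) (Q (Q u)) = a := by rw [hinv, hinv]
  have h3 : g (Q u) (Q (Q u)) = b := hinv u (Q u)
  have h4 : g u (Q (Q u)) = b := by
    have h := hinv (Q u) (Q (Q u))
    rw [Q_cube] at h
    rw [← hsymm, h, h3]
  have h3' : g (Q (Q u)) (Q u) = b := by rw [hsymm, h3]
  have h4' : g (Q (Q u)) u = b := by rw [hsymm, h4]
  have h5 : g (Q u) u = b := by rw [hsymm]
  have expand : g s s = 3 * a + 6 * b := by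
    simp only [hs', map_add, LinearMap.add_apply]
    rw [h1, h2, h3, h4, h3', h4', h5, ← ha', ← hb']
    ring
  rw [expand] at hs
  rw [le_div_iff₀ ha]
  linarith
end

section
/- With u a g-unit vector, cos φ = g(u,qu), sin φ = √(1−cos²φ) > 0, and w = (1/sin φ)(−cos φ · u + qu), the associated form f satisfies: f(u,u) = 2cos φ, f(w,w) = −2cos²φ/(1+cos φ), and f(u,w) = (1 + cos φ − 2cos²φ)/sin φ. -/
namespace LinearMap.BilinForm

variable {R M : Type*} [CommRing R] [AddCommGroup M] [Module R M]

def cyclicForm (g : LinearMap.BilinForm R M) (T : M →ₗ[R] M) : LinearMap.BilinForm R M :=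
  g.compRight T + g.compLeft T

variable (g : LinearMap.BilinForm R M) (T : M →ₗ[R] M)

theorem cyclicForm_apply (x y : M) : g.cyclicForm T x y = g x (T y) + g (T x) y := rfl

variable {g T}

theorem cyclicForm_self (hsymm : ∀ x y, g x y = g y x) (u : M) :
    g.cyclicForm T u u = 2 * g u (T u) := by
  rw [cyclicForm_apply, hsymm (T u)]
  ring

section OrderThree

variable (hsymm : ∀ x y, g x y = g y x) (hinv : ∀ x y, g (T x) (T y) = g x y)
  (hT : ∀ x, T (T (T x)) = x)
include hsymm hinv hT

theorem apply_apply_apply_self (u : M) : g u (T (T u)) = g u (T u) := by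
  rw [hsymm, ← hinv, hT, hsymm]

variable {u : M} (hu : g u u = 1)
include hu

theorem cyclicForm_smul_add_apply :
    g.cyclicForm T u (-g u (T u) • u + T u) = 1 + g u (T u) - 2 * g u (T u) ^ 2 := by
  simp only [cyclicForm_apply, map_add, map_smul, smul_eq_mul, hinv, hu,
    apply_apply_apply_self hsymm hinv hT, hsymm (T u) u]
  ring

theorem cyclicForm_smul_add_self :
    g.cyclicForm T (-g u (T u) • u + T u) (-g u (T u) • u + T u) =
      2 * g u (T u) ^ 2 * (g u (T u) - 1) := by
  simp only [cyclicForm_apply, map_add, map_smul, LinearMap.add_apply, LinearMap.smul_apply,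
    smul_eq_mul, hinv, hu, apply_apply_apply_self hsymm hinv hT, hsymm (T u) u, hsymm (T (T u)) u]
  ring

end OrderThree

end LinearMap.BilinForm

open LinearMap.BilinForm

def Qₗ : (Fin 3 → ℝ) →ₗ[ℝ] (Fin 3 → ℝ) := Matrix.mulVecLin !![(0:ℝ),1,0; 0,0,1; 1,0,0]

theorem Qₗ_apply (v : Fin 3 → ℝ) : Qₗ v = Q v := rfl

theorem Qₗ_Qₗ_Qₗ (v : Fin 3 → ℝ) : Qₗ (Qₗ (Qₗ v)) = v := by
  funext i
  fin_cases i <;> simp [Qₗ, Matrix.mulVec, dotProduct, Fin.sum_univ_succ]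

theorem f_on_u_w_general (g : LinearMap.BilinForm ℝ (Fin 3 → ℝ))
    (hsymm : ∀ u v, g u v = g v u)
    (hinv : ∀ u v, g (Q u) (Q v) = g u v)
    (f : (Fin 3 → ℝ) → (Fin 3 → ℝ) → ℝ)
    (hf : ∀ u v, f u v = g u (Q v) + g (Q u) v)
    (u : Fin 3 → ℝ) (hu : g u u = 1)
    (φ : ℝ) (hφ : φ ∈ Set.Ioo 0 (2 * Real.pi / 3))
    (hcos : g u (Q u) = Real.cos φ)
    (w : Fin 3 → ℝ)
    (hw : w = (1 / Real.sin φ) • (-(Real.cos φ) • u + Q u)) :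
    f u u = 2 * Real.cos φ ∧
    f w w = -(2 * Real.cos φ ^ 2) / (1 + Real.cos φ) ∧
    f u w = (1 + Real.cos φ - 2 * Real.cos φ ^ 2) / Real.sin φ := by
  obtain ⟨hφ₀, hφ₁⟩ := hφ
  have hf' : ∀ x y, f x y = g.cyclicForm Qₗ x y := hf
  have hinv' : ∀ x y, g (Qₗ x) (Qₗ y) = g x y := hinv
  have hcos' : g u (Qₗ u) = Real.cos φ := hcos
  rw [← Qₗ_apply, ← hcos'] at hw
  have hsin_pos : 0 < Real.sin φ := Real.sin_pos_of_pos_of_lt_pi hφ₀ (by linarith [Real.pi_pos])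
  have hcos_gt_neg_one : -1 < Real.cos φ := by
    rw [← Real.cos_pi]
    exact Real.cos_lt_cos_of_nonneg_of_le_pi hφ₀.le le_rfl (by linarith [Real.pi_pos])
  refine ⟨?_, ?_, ?_⟩
  · rw [hf', cyclicForm_self hsymm, hcos']
  · rw [hf', hw, LinearMap.map_smul₂, map_smul, smul_eq_mul, smul_eq_mul,
      cyclicForm_smul_add_self hsymm hinv' Qₗ_Qₗ_Qₗ hu, hcos']
    have hcos_add_one : 1 + Real.cos φ ≠ 0 := by linarith
    field_simp
    linear_combination Real.cos φ ^ 2 * Real.sin_sq_add_cos_sq φ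
  · rw [hf', hw, map_smul, smul_eq_mul, cyclicForm_smul_add_apply hsymm hinv' Qₗ_Qₗ_Qₗ hu, hcos']
    field_simp

theorem f_on_u_w (g : LinearMap.BilinForm ℝ (Fin 3 → ℝ))
    (hsymm : ∀ u v, g u v = g v u)
    (hpos : ∀ u, u ≠ 0 → 0 < g u u)
    (hinv : ∀ u v, g (Q u) (Q v) = g u v)
    (f : (Fin 3 → ℝ) → (Fin 3 → ℝ) → ℝ)
    (hf : ∀ u v, f u v = g u (Q v) + g (Q u) v)
    (u : Fin 3 → ℝ) (hu : g u u = 1)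
    (φ : ℝ) (hφ : φ ∈ Set.Ioo 0 (2 * Real.pi / 3))
    (hcos : g u (Q u) = Real.cos φ)
    (hsin : Real.sin φ = Real.sqrt (1 - Real.cos φ ^ 2))
    (w : Fin 3 → ℝ)
    (hw : w = (1 / Real.sin φ) • (-(Real.cos φ) • u + Q u)) :
    f u u = 2 * Real.cos φ ∧
    f w w = -(2 * Real.cos φ ^ 2) / (1 + Real.cos φ) ∧
    f u w = (1 + Real.cos φ - 2 * Real.cos φ ^ 2) / Real.sin φ :=
  f_on_u_w_general g hsymm hinv f hf u hu φ hφ hcos w hw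
end

section
/- With u, w, φ as above and v = x·u + y·w, the equation f(v,v) = r² is equivalent to (cos φ)x² + ((1−cos φ)(1+2cos φ)/sin φ)xy − (cos²φ/(1+cos φ))y² = r²/2. -/
/-!
Symmetry of `g` gives `f v v = 2 g(v, q v)`. Since `q` is a `g`-isometry with `q³ = 1`, the
values of `g` on `u, q u, q² u` are `1` on the diagonal and `cos φ` off it, so the three numbers
`g(u, q w)`, `g(w, q u)`, `g(w, q w)` are explicit in `cos φ` and `sin φ`, and expanding
`g(v, q v)` bilinearly in `v = x u + y w` gives the quadratic form.
-/

noncomputable def cyclicPerm : (Fin 3 → ℝ) →ₗ[ℝ] (Fin 3 → ℝ) :=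
  Matrix.mulVecLin !![(0:ℝ),1,0; 0,0,1; 1,0,0]

theorem coe_cyclicPerm : ⇑cyclicPerm = Q := rfl

theorem Q_Q_Q (p : Fin 3 → ℝ) : Q (Q (Q p)) = p := by
  funext i
  fin_cases i <;> simp [Q, Matrix.mulVec, dotProduct, Fin.sum_univ_three]

section CyclicIsometry

variable {K V : Type*} [Field K] [AddCommGroup V] [Module K V] {g : LinearMap.BilinForm K V}
  {q : V →ₗ[K] V}

theorem apply_map_smul_add_smul (x y : K) (a b : V) :
    g (x • a + y • b) (q (x • a + y • b)) =
      x ^ 2 * g a (q a) + x * y * (g a (q b) + g b (q a)) + y ^ 2 * g b (q b) := by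
  simp only [map_add, map_smul, LinearMap.add_apply, LinearMap.smul_apply, smul_eq_mul]
  ring

theorem apply_map_map_eq_apply_map (hsymm : ∀ a b, g a b = g b a)
    (hinv : ∀ a b, g (q a) (q b) = g a b) (hq : ∀ a, q (q (q a)) = a) (a : V) :
    g a (q (q a)) = g a (q a) := by
  rw [← hinv, hq, hsymm]

theorem apply_map_of_frame (hsymm : ∀ a b, g a b = g b a)
    (hinv : ∀ a b, g (q a) (q b) = g a b) (hq : ∀ a, q (q (q a)) = a) {u w : V} {c s : K}
    (hu : g u u = 1) (hc : g u (q u) = c) (hs : s ≠ 0) (hsc : s ^ 2 + c ^ 2 = 1)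
    (hw : w = (1 / s) • (-c • u + q u)) (x y : K) :
    g (x • u + y • w) (q (x • u + y • w)) =
      c * x ^ 2 + ((1 - c) * (1 + 2 * c) / s) * x * y - (c ^ 2 / (1 + c)) * y ^ 2 := by
  have hc1 : 1 + c ≠ 0 := by
    rintro hc1
    exact hs (pow_eq_zero_iff two_ne_zero |>.mp (by linear_combination hsc + (1 - c) * hc1))
  have hqu_qu : g (q u) (q u) = 1 := by rw [hinv, hu]
  have hu_qqu : g u (q (q u)) = c := by rw [apply_map_map_eq_apply_map hsymm hinv hq, hc]
  have hqu_qqu : g (q u) (q (q u)) = c := by rw [hinv, hc]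
  have hu_qw : g u (q w) = c * (1 - c) / s := by
    simp only [hw, map_add, map_smul, smul_eq_mul, hc, hu_qqu]
    field_simp
    ring
  have hw_qu : g w (q u) = (1 - c) * (1 + c) / s := by
    simp only [hw, map_add, map_smul, LinearMap.add_apply, LinearMap.smul_apply, smul_eq_mul,
      hc, hqu_qu]
    field_simp
    ring
  have hw_qw : g w (q w) = -c ^ 2 / (1 + c) := by
    simp only [hw, map_add, map_smul, LinearMap.add_apply, LinearMap.smul_apply, smul_eq_mul,
      hc, hqu_qu, hu_qqu, hqu_qqu]
    field_simp
    linear_combination c ^ 2 * hsc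
  rw [apply_map_smul_add_smul, hc, hu_qw, hw_qu, hw_qw]
  field_simp
  ring

end CyclicIsometry

theorem circle_equation_general (g : LinearMap.BilinForm ℝ (Fin 3 → ℝ))
    (hsymm : ∀ u v, g u v = g v u)
    (hinv : ∀ u v, g (Q u) (Q v) = g u v)
    (f : (Fin 3 → ℝ) → (Fin 3 → ℝ) → ℝ)
    (hf : ∀ u v, f u v = g u (Q v) + g (Q u) v)
    (u : Fin 3 → ℝ) (hu : g u u = 1)
    (φ : ℝ) (hφ : φ ∈ Set.Ioo 0 (2 * Real.pi / 3))
    (hcos : g u (Q u) = Real.cos φ)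
    (w : Fin 3 → ℝ)
    (hw : w = (1 / Real.sin φ) • (-(Real.cos φ) • u + Q u))
    (x y r : ℝ) (v : Fin 3 → ℝ) (hv : v = x • u + y • w) :
    f v v = r ^ 2 ↔
    Real.cos φ * x ^ 2 +
      ((1 - Real.cos φ) * (1 + 2 * Real.cos φ) / Real.sin φ) * x * y -
      (Real.cos φ ^ 2 / (1 + Real.cos φ)) * y ^ 2 = r ^ 2 / 2 := by
  have hsin : Real.sin φ ≠ 0 :=
    (Real.sin_pos_of_pos_of_lt_pi hφ.1 (by linarith [hφ.2, Real.pi_pos])).ne'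
  have hquad := apply_map_of_frame (q := cyclicPerm) hsymm hinv Q_Q_Q hu hcos hsin
    (Real.sin_sq_add_cos_sq φ) hw x y
  rw [coe_cyclicPerm, ← hv] at hquad
  rw [hf, ← hsymm v, hquad]
  constructor <;> intro h <;> linarith

theorem circle_equation (g : LinearMap.BilinForm ℝ (Fin 3 → ℝ))
    (hsymm : ∀ u v, g u v = g v u)
    (hpos : ∀ u, u ≠ 0 → 0 < g u u)
    (hinv : ∀ u v, g (Q u) (Q v) = g u v)
    (f : (Fin 3 → ℝ) → (Fin 3 → ℝ) → ℝ)
    (hf : ∀ u v, f u v = g u (Q v) + g (Q u) v)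
    (u : Fin 3 → ℝ) (hu : g u u = 1)
    (φ : ℝ) (hφ : φ ∈ Set.Ioo 0 (2 * Real.pi / 3))
    (hcos : g u (Q u) = Real.cos φ)
    (w : Fin 3 → ℝ)
    (hw : w = (1 / Real.sin φ) • (-(Real.cos φ) • u + Q u))
    (x y r : ℝ) (v : Fin 3 → ℝ) (hv : v = x • u + y • w) :
    f v v = r ^ 2 ↔
    Real.cos φ * x ^ 2 +
      ((1 - Real.cos φ) * (1 + 2 * Real.cos φ) / Real.sin φ) * x * y -
      (Real.cos φ ^ 2 / (1 + Real.cos φ)) * y ^ 2 = r ^ 2 / 2 :=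
  circle_equation_general g hsymm hinv f hf u hu φ hφ hcos w hw x y r v hv
end
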